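/- For nonnegative integers i and n with 2i ≥ n, the coefficient of z^{2i} t^n in the power series Π_{k≥1} (1 − z^{2k−2} t^k)^{-1} (1 − z^{2k} t^k)^{-1} (1 − z^{2k+2} t^k)^{-1} does not depend on n; equivalently, the even Betti numbers b_{2i}((ℙ²)^[n]) stabilize: b_{2i}((ℙ²)^[n]) = b_{2i}((ℙ²)^[m]) whenever 2i ≤ min(n, m). -/

import Mathlib

/-!
Since `(1 − t)^{-1}` is the only factor whose `z`-exponent is smaller than its `t`-exponent,
the product is `(1 − t)^{-1} · Q(z, z t)` for a power series `Q ∈ ℤ[z][[t]]`. Hence the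
coefficient of `z^d tⁿ` is `Σ_{j ≤ min(n, d)} [z^{d-j} t^j] Q`, which no longer depends on
`n` once `n ≥ d`. Truncating the product at `k ≤ n` does not change the coefficient of `tⁿ`,
because every factor with `k > n` is `1` modulo `t^{n+1}`.
-/

open PowerSeries Polynomial

/-- The geometric series `(1 − z^a t^k)^{-1} = Σ_{l≥0} z^{al} t^{kl}` in `ℤ[z][[t]]`. -/
noncomputable def goettscheFactor (a k : ℕ) : PowerSeries (Polynomial ℤ) :=
  PowerSeries.mk fun m => if k ∣ m then (Polynomial.X : Polynomial ℤ) ^ (a * (m / k)) else 0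

/-- The Göttsche product, truncated at `k ≤ N` (factors with `k > N` do not affect
coefficients of `t^n` for `n ≤ N`). -/
noncomputable def goettscheProd (N : ℕ) : PowerSeries (Polynomial ℤ) :=
  ∏ k ∈ Finset.Icc 1 N,
    goettscheFactor (2 * k - 2) k * goettscheFactor (2 * k) k * goettscheFactor (2 * k + 2) k

theorem dvd_mul_sub_one {R : Type*} [CommRing R] {a x y : R} (hx : a ∣ x - 1) (hy : a ∣ y - 1) :
    a ∣ x * y - 1 := by
  rw [show x * y - 1 = x * (y - 1) + (x - 1) by ring]
  exact dvd_add (dvd_mul_of_dvd_right hy x) hx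

theorem Finset.dvd_prod_sub_one {ι R : Type*} [CommRing R] {a : R} {s : Finset ι} {f : ι → R}
    (h : ∀ i ∈ s, a ∣ f i - 1) : a ∣ ∏ i ∈ s, f i - 1 :=
  Finset.prod_induction f (fun x => a ∣ x - 1) (fun _ _ => dvd_mul_sub_one) (by simp) h

namespace PowerSeries

variable {R : Type*} [CommRing R]

theorem coeff_mul_eq_of_X_pow_dvd_sub_one {n N : ℕ} (hn : n < N) (P : R⟦X⟧) {T : R⟦X⟧}
    (hT : X ^ N ∣ T - 1) : coeff n (P * T) = coeff n P := by
  have hdiff : X ^ N ∣ P * T - P := by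
    rw [show P * T - P = P * (T - 1) by ring]
    exact dvd_mul_of_dvd_right hT P
  exact sub_eq_zero.mp (X_pow_dvd_iff.mp hdiff n hn)

theorem coeff_mk_one_mul (P : R⟦X⟧) (n : ℕ) :
    coeff n (mk 1 * P) = ∑ j ∈ Finset.range (n + 1), coeff j P := by
  rw [mul_comm, coeff_mul, Finset.Nat.sum_antidiagonal_eq_sum_range_succ
    (fun p q => coeff p P * coeff q (mk 1 : R⟦X⟧))]
  simp

theorem coeff_coeff_mk_one_mul_rescale_X (Q : R[X]⟦X⟧) {d n : ℕ} (hdn : d ≤ n) :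
    (coeff n (mk 1 * rescale Polynomial.X Q)).coeff d =
      ∑ j ∈ Finset.range (d + 1), (coeff j Q).coeff (d - j) := by
  rw [coeff_mk_one_mul, Polynomial.finsetSum_coeff]
  have hvanish : ∀ j ∈ Finset.range (n + 1), j ∉ Finset.range (d + 1) →
      (coeff j (rescale Polynomial.X Q)).coeff d = 0 := by
    intro j _ hj
    rw [coeff_rescale, Polynomial.coeff_X_pow_mul', if_neg (by simpa using hj)]
  rw [← Finset.sum_subset (Finset.range_subset_range.mpr (by omega)) hvanish]
  refine Finset.sum_congr rfl fun j hj => ?_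
  rw [coeff_rescale, Polynomial.coeff_X_pow_mul', if_pos (by simpa [Nat.lt_succ_iff] using hj)]

end PowerSeries

noncomputable def goettscheTriple (k : ℕ) : ℤ[X]⟦X⟧ :=
  goettscheFactor (2 * k - 2) k * goettscheFactor (2 * k) k * goettscheFactor (2 * k + 2) k

theorem goettscheProd_eq_prod_Ioc (N : ℕ) :
    goettscheProd N = ∏ k ∈ Finset.Ioc 0 N, goettscheTriple k :=
  rfl

theorem X_pow_dvd_goettscheFactor_sub_one (a k : ℕ) :
    (PowerSeries.X : PowerSeries ℤ[X]) ^ k ∣ goettscheFactor a k - 1 := by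
  refine X_pow_dvd_iff.mpr fun m hm => ?_
  rcases Nat.eq_zero_or_pos m with rfl | hm0
  · simp [goettscheFactor]
  · have hndvd : ¬ k ∣ m := fun hdvd => (Nat.le_of_dvd hm0 hdvd).not_gt hm
    simp [goettscheFactor, hndvd, PowerSeries.coeff_one, hm0.ne']

theorem X_pow_dvd_goettscheTriple_sub_one (k : ℕ) :
    (PowerSeries.X : PowerSeries ℤ[X]) ^ k ∣ goettscheTriple k - 1 :=
  dvd_mul_sub_one (dvd_mul_sub_one (X_pow_dvd_goettscheFactor_sub_one _ k)
    (X_pow_dvd_goettscheFactor_sub_one _ k)) (X_pow_dvd_goettscheFactor_sub_one _ k)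

theorem coeff_goettscheProd_of_le {n M : ℕ} (hnM : n ≤ M) :
    coeff n (goettscheProd M) = coeff n (goettscheProd n) := by
  rw [goettscheProd_eq_prod_Ioc, goettscheProd_eq_prod_Ioc,
    ← Finset.prod_Ioc_consecutive _ n.zero_le hnM]
  refine coeff_mul_eq_of_X_pow_dvd_sub_one (Nat.lt_succ_self n) _ (Finset.dvd_prod_sub_one ?_)
  intro k hk
  exact (pow_dvd_pow _ (Finset.mem_Ioc.mp hk).1).trans (X_pow_dvd_goettscheTriple_sub_one k)

theorem goettscheFactor_mem_range_rescale {a k : ℕ} (hka : k ≤ a) :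
    goettscheFactor a k ∈ (rescale (Polynomial.X : ℤ[X])).range := by
  refine ⟨goettscheFactor (a - k) k, PowerSeries.ext fun m => ?_⟩
  by_cases hdvd : k ∣ m
  · obtain ⟨l, rfl⟩ := hdvd
    rcases Nat.eq_zero_or_pos k with rfl | hk
    · simp [goettscheFactor]
    · have hexp : k * l + (a - k) * l = a * l := by rw [← add_mul, Nat.add_sub_cancel' hka]
      simp [goettscheFactor, hk.ne', ← pow_add, hexp]
  · simp [goettscheFactor, hdvd]

theorem goettscheFactor_zero_one : goettscheFactor 0 1 = mk 1 := by
  ext m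
  simp [goettscheFactor]

theorem goettscheProd_eq_mk_one_mul_rescale {N : ℕ} (hN : 1 ≤ N) :
    ∃ Q, goettscheProd N = mk 1 * rescale (Polynomial.X : ℤ[X]) Q := by
  have htriple (k : ℕ) (hk : k ∈ Finset.Ioc 1 N) :
      goettscheTriple k ∈ (rescale (Polynomial.X : ℤ[X])).range := by
    have hk2 := (Finset.mem_Ioc.mp hk).1
    exact mul_mem (mul_mem (goettscheFactor_mem_range_rescale (by omega))
      (goettscheFactor_mem_range_rescale (by omega))) (goettscheFactor_mem_range_rescale (by omega))
  obtain ⟨Q, hQ⟩ :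
      goettscheFactor 2 1 * goettscheFactor 4 1 * ∏ k ∈ Finset.Ioc 1 N, goettscheTriple k
        ∈ (rescale (Polynomial.X : ℤ[X])).range :=
    mul_mem (mul_mem (goettscheFactor_mem_range_rescale (by omega))
      (goettscheFactor_mem_range_rescale (by omega))) (prod_mem htriple)
  refine ⟨Q, ?_⟩
  rw [hQ, goettscheProd_eq_prod_Ioc, ← Finset.prod_Ioc_consecutive _ zero_le_one hN,
    show Finset.Ioc 0 1 = {1} from rfl, Finset.prod_singleton, ← goettscheFactor_zero_one]
  simp only [goettscheTriple, mul_assoc]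

/-- Stabilization: the coefficient of `z^{2i} t^n` in Göttsche's product
(i.e. `b_{2i}((ℙ²)^[n])`) is the same for all `n ≥ 2i`. -/
theorem stmt8 (i n m : ℕ) (hn : 2 * i ≤ n) (hm : 2 * i ≤ m) :
    ((PowerSeries.coeff (R := Polynomial ℤ) n) (goettscheProd n)).coeff (2 * i)
      = ((PowerSeries.coeff (R := Polynomial ℤ) m) (goettscheProd m)).coeff (2 * i) := by
  obtain ⟨Q, hQ⟩ := goettscheProd_eq_mk_one_mul_rescale (N := n + m + 1) (by omega)
  rw [← coeff_goettscheProd_of_le (by omega : n ≤ n + m + 1),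
    ← coeff_goettscheProd_of_le (by omega : m ≤ n + m + 1), hQ,
    coeff_coeff_mk_one_mul_rescale_X Q hn, coeff_coeff_mk_one_mul_rescale_X Q hm]
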